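/- For every integer n ≥ 1 and every nonempty finite set P ⊂ ℝ, one has g_n^M(P) = g_n^P(P). That is, the infimum of the Minkowski dimension over bounded sets B ⊆ ℝ^n that contain a P-pattern with basepoint x for every x ∈ [0,1]^n equals the infimum of the packing dimension over (arbitrary) sets B ⊆ ℝ^n with the same property. -/

import Mathlib

open Set Filter Bornology

/-- Covering number of `E` by open balls of radius `ε`. -/
noncomputable def covNum {X : Type*} [PseudoMetricSpace X] (E : Set X) (ε : ℝ) : ℕ∞ :=
  ⨅ (t : Finset X) (_ : E ⊆ ⋃ x ∈ t, Metric.ball x ε), (t.card : ℕ∞)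

/-- Upper Minkowski (box-counting) dimension. -/
noncomputable def dimM {X : Type*} [PseudoMetricSpace X] (E : Set X) : ℝ :=
  limsup (fun ε : ℝ => Real.log ((covNum E ε).toNat) / Real.log (1 / ε))
    (nhdsWithin 0 (Ioi 0))

/-- Packing dimension, as modified upper box dimension: the infimum of
`⨆ j, dimM (E j)` over countable covers of the set by bounded sets. -/
noncomputable def dimP {X : Type*} [PseudoMetricSpace X] (E : Set X) : ℝ :=
  sInf { a : ℝ | ∃ f : ℕ → Set X, (E ⊆ ⋃ j, f j) ∧ (∀ j, IsBounded (f j)) ∧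
    a = ⨆ j, dimM (f j) }

/-!
Packing dimension never exceeds Minkowski dimension on bounded sets, which gives one inequality.
Conversely, let `B` contain a `P`-pattern based at every point of the cube, and cover `B` by
bounded sets `f j` of upper Minkowski dimension below `s`. The finitely many points of each pattern
lie in one of the increasing finite unions `F k`, so the cube is the countable union of the sets
`{x | ∃ r, ‖r‖ ≤ m ∧ x + P • r ⊆ closure (F k)}`, which are closed by compactness. By Baire
category one of them contains a relative ball of the cube, hence a small homothetic copy of the
cube, and undoing that homothety turns `closure (F k)` into a bounded set with patterns at every
point of the cube. Homotheties, closures and finite unions do not raise upper Minkowski dimension,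
so this set has dimension below `s`.
-/
open Metric Topology

section CoveringNumber

variable {X Y : Type*} [PseudoMetricSpace X] [PseudoMetricSpace Y] {E F : Set X} {ε δ : ℝ}

lemma covNum_le_card {t : Finset X} (h : E ⊆ ⋃ x ∈ t, ball x ε) : covNum E ε ≤ t.card :=
  iInf₂_le t h

lemma covNum_mono (h : E ⊆ F) : covNum E ε ≤ covNum F ε :=
  le_iInf₂ fun _ ht => covNum_le_card (h.trans ht)

lemma covNum_ne_top (hE : TotallyBounded E) (hε : 0 < ε) : covNum E ε ≠ ⊤ := by
  obtain ⟨t, ht, hEt⟩ := totallyBounded_iff.mp hE ε hε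
  refine ne_top_of_le_ne_top (ENat.natCast_ne_top ht.toFinset.card) (covNum_le_card ?_)
  simpa using hEt

lemma covNum_union_le : covNum (E ∪ F) ε ≤ covNum E ε + covNum F ε := by
  classical
  simp only [covNum, ENat.iInf₂_add, ENat.add_iInf₂, le_iInf_iff]
  intro s hs t ht
  refine iInf₂_le_of_le (t ∪ s) ?_ (mod_cast t.card_union_le s)
  simp only [Finset.set_biUnion_union]
  exact union_subset_union ht hs

lemma covNum_closure_le (h : δ < ε) : covNum (closure E) ε ≤ covNum E δ := by
  refine le_iInf₂ fun t ht => covNum_le_card ?_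
  calc closure E ⊆ ⋃ x ∈ t, closedBall x δ :=
        closure_minimal (ht.trans (iUnion₂_mono fun _ _ => ball_subset_closedBall))
          (t.finite_toSet.isClosed_biUnion fun _ _ => isClosed_closedBall)
    _ ⊆ ⋃ x ∈ t, ball x ε := iUnion₂_mono fun _ _ => closedBall_subset_ball h

lemma LipschitzWith.covNum_image_le {f : X → Y} {K : NNReal} (hf : LipschitzWith K f)
    (hK : 0 < K) : covNum (f '' E) ε ≤ covNum E (ε / K) := by
  classical
  refine le_iInf₂ fun t ht => (covNum_le_card (t := t.image f) ?_).trans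
    (mod_cast t.card_image_le)
  rintro _ ⟨y, hy, rfl⟩
  obtain ⟨x, hx, hyx⟩ := mem_iUnion₂.mp (ht hy)
  refine mem_iUnion₂.mpr ⟨f x, Finset.mem_image_of_mem f hx, ?_⟩
  calc dist (f y) (f x) ≤ K * dist y x := hf.dist_le_mul y x
    _ < K * (ε / K) := mul_lt_mul_of_pos_left (mem_ball.mp hyx) (mod_cast hK)
    _ = ε := mul_div_cancel₀ ε (mod_cast hK.ne')

end CoveringNumber

section UpperBoxDimension

variable {X Y : Type*} [PseudoMetricSpace X] [PseudoMetricSpace Y] {E F : Set X} {E' : Set Y}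
  {a b c : ℝ}

/-- Since `(⊤ : ℕ∞).toNat = 0`, membership carries no information unless the covering numbers
are finite, hence the `TotallyBounded` hypotheses below. -/
def dimMBounds (E : Set X) : Set ℝ :=
  {a | ∀ᶠ ε in 𝓝[>] 0, Real.log (covNum E ε).toNat / Real.log (1 / ε) ≤ a}


lemma mem_dimMBounds :
    a ∈ dimMBounds E ↔ ∀ᶠ ε in 𝓝[>] 0, Real.log (covNum E ε).toNat / Real.log (1 / ε) ≤ a :=
  Iff.rfl


lemma dimM_eq_sInf_dimMBounds (E : Set X) : dimM E = sInf (dimMBounds E) := limsup_eq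


lemma nonneg_of_mem_dimMBounds (ha : a ∈ dimMBounds E) : 0 ≤ a := by
  obtain ⟨ε, hbound, hε0, hε1⟩ := ((mem_dimMBounds.1 ha).and (Ioo_mem_nhdsGT one_pos)).exists
  exact (div_nonneg (Real.log_natCast_nonneg _) (Real.log_pos (one_lt_one_div hε0 hε1)).le).trans
    hbound


lemma mem_dimMBounds_of_le (ha : a ∈ dimMBounds E) (hab : a ≤ b) : b ∈ dimMBounds E :=
  (mem_dimMBounds.1 ha).mono fun _ h => h.trans hab


lemma bddBelow_dimMBounds (E : Set X) : BddBelow (dimMBounds E) :=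
  ⟨0, fun _ => nonneg_of_mem_dimMBounds⟩


lemma dimM_nonneg (E : Set X) : 0 ≤ dimM E := by
  rw [dimM_eq_sInf_dimMBounds]
  exact Real.sInf_nonneg fun _ => nonneg_of_mem_dimMBounds


lemma dimM_le_of_forall_lt_mem (h : ∀ b, c < b → b ∈ dimMBounds E) : dimM E ≤ c := by
  rw [dimM_eq_sInf_dimMBounds]
  exact le_of_forall_gt_imp_ge_of_dense fun b hb => csInf_le (bddBelow_dimMBounds E) (h b hb)


lemma exists_mem_dimMBounds_lt (hE : (dimMBounds E).Nonempty) (hb : dimM E < b) :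
    ∃ a ∈ dimMBounds E, a < b :=
  exists_lt_of_csInf_lt hE ((dimM_eq_sInf_dimMBounds E) ▸ hb)


lemma tendsto_log_one_div_nhdsGT_zero : Tendsto (fun ε : ℝ => Real.log (1 / ε)) (𝓝[>] 0) atTop := by
  refine (tendsto_neg_atBot_atTop.comp Real.tendsto_log_nhdsGT_zero).congr fun ε => ?_
  simp


lemma tendsto_div_const_nhdsGT_zero (hc : 0 < c) :
    Tendsto (fun ε : ℝ => ε / c) (𝓝[>] 0) (𝓝[>] 0) :=
  tendsto_nhdsWithin_of_tendsto_nhds_of_eventually_within _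
    (((continuous_id.div_const c).tendsto' 0 0 (zero_div c)).mono_left nhdsWithin_le_nhds)
    (eventually_mem_nhdsWithin.mono fun _ hε => div_pos hε hc)


lemma covNum_toNat_le_rpow_of_mem_dimMBounds (ha : a ∈ dimMBounds E) :
    ∀ᶠ ε in 𝓝[>] 0, ((covNum E ε).toNat : ℝ) ≤ ε ^ (-a) := by
  filter_upwards [mem_dimMBounds.1 ha, Ioo_mem_nhdsGT one_pos] with ε hbound ⟨hε0, hε1⟩
  rcases Nat.eq_zero_or_pos (covNum E ε).toNat with hN | hN
  · rw [hN, Nat.cast_zero]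
    positivity
  have hlog : 0 < Real.log (1 / ε) := Real.log_pos (one_lt_one_div hε0 hε1)
  rw [← Real.log_le_log_iff (mod_cast hN) (by positivity), Real.log_rpow hε0]
  rw [div_le_iff₀ hlog, one_div, Real.log_inv] at hbound
  linarith


lemma mem_dimMBounds_of_covNum_le_rpow (ha : 0 ≤ a) (hab : a < b) (C : ℝ)
    (h : ∀ᶠ ε in 𝓝[>] 0, ((covNum E ε).toNat : ℝ) ≤ C * ε ^ (-a)) : b ∈ dimMBounds E := by
  have hC : ∀ᶠ ε in 𝓝[>] 0, Real.log C ≤ (b - a) * Real.log (1 / ε) :=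
    (tendsto_log_one_div_nhdsGT_zero.const_mul_atTop (sub_pos.2 hab)).eventually_ge_atTop _
  filter_upwards [h, hC, Ioo_mem_nhdsGT one_pos] with ε hN hC ⟨hε0, hε1⟩
  have hlog : 0 < Real.log (1 / ε) := Real.log_pos (one_lt_one_div hε0 hε1)
  rw [div_le_iff₀ hlog]
  rcases Nat.eq_zero_or_pos (covNum E ε).toNat with hN0 | hN0
  · rw [hN0, Nat.cast_zero, Real.log_zero]
    exact mul_nonneg (ha.trans hab.le) hlog.le
  have hN1 : (1 : ℝ) ≤ (covNum E ε).toNat := mod_cast hN0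
  have hCpos : 0 < C := pos_of_mul_pos_left (one_pos.trans_le (hN1.trans hN)) (by positivity)
  calc Real.log (covNum E ε).toNat ≤ Real.log (C * ε ^ (-a)) := Real.log_le_log (by linarith) hN
    _ = Real.log C + a * Real.log (1 / ε) := by
      rw [Real.log_mul hCpos.ne' (Real.rpow_pos_of_pos hε0 _).ne', Real.log_rpow hε0, one_div,
        Real.log_inv]
      ring
    _ ≤ b * Real.log (1 / ε) := by linarith


lemma mem_dimMBounds_of_covNum_le (hE : TotallyBounded E) (hc : 0 < c)
    (hcov : ∀ᶠ ε in 𝓝[>] 0, covNum E' ε ≤ covNum E (ε / c)) (ha : a ∈ dimMBounds E)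
    (hab : a < b) : b ∈ dimMBounds E' := by
  have hE_le := (tendsto_div_const_nhdsGT_zero hc).eventually
    (covNum_toNat_le_rpow_of_mem_dimMBounds ha)
  refine mem_dimMBounds_of_covNum_le_rpow (nonneg_of_mem_dimMBounds ha) hab (c ^ a) ?_
  filter_upwards [hcov, hE_le, self_mem_nhdsWithin] with ε hcov hE_le (hε : 0 < ε)
  calc ((covNum E' ε).toNat : ℝ) ≤ (covNum E (ε / c)).toNat :=
        mod_cast ENat.toNat_le_toNat hcov (covNum_ne_top hE (div_pos hε hc))
    _ ≤ (ε / c) ^ (-a) := hE_le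
    _ = c ^ a * ε ^ (-a) := by
      rw [Real.div_rpow hε.le hc.le, Real.rpow_neg hc.le, div_inv_eq_mul, mul_comm]


lemma dimM_le_dimM_of_covNum_le (hE : TotallyBounded E) (hE' : (dimMBounds E).Nonempty)
    (hc : 0 < c) (hcov : ∀ᶠ ε in 𝓝[>] 0, covNum E' ε ≤ covNum E (ε / c)) :
    dimM E' ≤ dimM E :=
  dimM_le_of_forall_lt_mem fun _ hb =>
    let ⟨_, ha, hab⟩ := exists_mem_dimMBounds_lt hE' hb
    mem_dimMBounds_of_covNum_le hE hc hcov ha hab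


lemma dimM_closure_le (hE : TotallyBounded E) (hE' : (dimMBounds E).Nonempty) :
    dimM (closure E) ≤ dimM E :=
  dimM_le_dimM_of_covNum_le hE hE' two_pos <|
    eventually_mem_nhdsWithin.mono fun _ hε => covNum_closure_le (half_lt_self hε)


lemma LipschitzWith.dimM_image_le {f : X → Y} {K : NNReal} (hf : LipschitzWith K f)
    (hE : TotallyBounded E) (hE' : (dimMBounds E).Nonempty) : dimM (f '' E) ≤ dimM E :=
  dimM_le_dimM_of_covNum_le hE hE' (by positivity : (0 : ℝ) < max K 1) <|
    Eventually.of_forall fun _ => (hf.weaken (le_max_left K 1)).covNum_image_le (by positivity)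


lemma dimM_union_le (hE : TotallyBounded E) (hF : TotallyBounded F)
    (hE' : (dimMBounds E).Nonempty) (hF' : (dimMBounds F).Nonempty) :
    dimM (E ∪ F) ≤ max (dimM E) (dimM F) := by
  refine dimM_le_of_forall_lt_mem fun b hb => ?_
  obtain ⟨a₁, ha₁, hab₁⟩ := exists_mem_dimMBounds_lt hE' ((le_max_left _ _).trans_lt hb)
  obtain ⟨a₂, ha₂, hab₂⟩ := exists_mem_dimMBounds_lt hF' ((le_max_right _ _).trans_lt hb)
  have hEa := covNum_toNat_le_rpow_of_mem_dimMBounds (mem_dimMBounds_of_le ha₁ (le_max_left a₁ a₂))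
  have hFa := covNum_toNat_le_rpow_of_mem_dimMBounds (mem_dimMBounds_of_le ha₂ (le_max_right a₁ a₂))
  refine mem_dimMBounds_of_covNum_le_rpow ((nonneg_of_mem_dimMBounds ha₁).trans (le_max_left _ _))
    (max_lt hab₁ hab₂) 2 ?_
  filter_upwards [hEa, hFa, self_mem_nhdsWithin] with ε hEa hFa (hε : 0 < ε)
  have hEε := covNum_ne_top hE hε
  have hFε := covNum_ne_top hF hε
  calc ((covNum (E ∪ F) ε).toNat : ℝ) ≤ ((covNum E ε).toNat + (covNum F ε).toNat : ℕ) := by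
        rw [← ENat.toNat_add hEε hFε]
        exact mod_cast ENat.toNat_le_toNat covNum_union_le (WithTop.add_ne_top.2 ⟨hEε, hFε⟩)
    _ ≤ 2 * ε ^ (-max a₁ a₂) := by push_cast; linarith

end UpperBoxDimension

lemma Bornology.IsBounded.totallyBounded {X : Type*} [PseudoMetricSpace X] [ProperSpace X]
    {E : Set X} (hE : IsBounded E) : TotallyBounded E :=
  hE.isCompact_closure.totallyBounded.subset subset_closure

lemma isBounded_accumulate {X : Type*} [Bornology X] {f : ℕ → Set X} (hf : ∀ j, IsBounded (f j))
    (k : ℕ) : IsBounded (accumulate f k) := by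
  rw [accumulate_def]
  exact (isBounded_biUnion (finite_le_nat k)).2 fun j _ => hf j

section FiniteDimensional

lemma covNum_pi_Icc_le (ι : Type*) [Fintype ι] (R : ℝ) {ε : ℝ} (hε : 0 < ε) :
    covNum (univ.pi fun _ : ι => Icc (-R) R) ε ≤ ((2 * ⌈R / ε⌉₊ + 1) ^ Fintype.card ι : ℕ) := by
  classical
  set M : ℕ := ⌈R / ε⌉₊
  set t : Finset (ι → ℝ) :=
    (Fintype.piFinset fun _ : ι => Finset.Icc (-(M : ℤ)) M).image fun k i => ε * k i
  have hcover : (univ.pi fun _ : ι => Icc (-R) R) ⊆ ⋃ y ∈ t, ball y ε := by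
    intro x hx
    have hfloor : ∀ i, ⌊x i / ε⌋ ∈ Finset.Icc (-(M : ℤ)) M := fun i => by
      have hxR : x i / ε ∈ Icc (-(R / ε)) (R / ε) := by
        obtain ⟨h₁, h₂⟩ := hx i (mem_univ i)
        constructor
        · rw [← neg_div]; gcongr
        · gcongr
      have hRM : R / ε ≤ M := Nat.le_ceil _
      refine Finset.mem_Icc.2 ⟨Int.le_floor.2 ?_, Int.floor_le_iff.2 ?_⟩ <;> push_cast <;>
        linarith [hxR.1, hxR.2]
    refine mem_iUnion₂.2 ⟨fun i => ε * ⌊x i / ε⌋, Finset.mem_image.2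
      ⟨fun i => ⌊x i / ε⌋, Fintype.mem_piFinset.2 hfloor, rfl⟩, ?_⟩
    rw [ball_pi _ hε]
    intro i _
    rw [mem_ball, Real.dist_eq, abs_lt]
    have h₁ := Int.floor_le (x i / ε)
    have h₂ := Int.lt_floor_add_one (x i / ε)
    constructor
    · nlinarith [mul_div_cancel₀ (x i) hε.ne']
    · nlinarith [mul_div_cancel₀ (x i) hε.ne']
  calc covNum _ ε ≤ t.card := covNum_le_card hcover
    _ ≤ (2 * M + 1) ^ Fintype.card ι := by
      refine mod_cast Finset.card_image_le.trans ?_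
      rw [Fintype.card_piFinset, Finset.prod_const, Finset.card_univ, Int.card_Icc]
      apply le_of_eq
      congr 1
      omega

lemma mem_dimMBounds_pi_Icc (ι : Type*) [Fintype ι] {R b : ℝ} (hR : 0 ≤ R)
    (hb : Fintype.card ι < b) : b ∈ dimMBounds (univ.pi fun _ : ι => Icc (-R) R) := by
  refine mem_dimMBounds_of_covNum_le_rpow (Nat.cast_nonneg _) hb ((2 * R + 3) ^ Fintype.card ι) ?_
  filter_upwards [Ioo_mem_nhdsGT one_pos] with ε ⟨hε0, hε1⟩
  have hM : (2 * ⌈R / ε⌉₊ + 1 : ℝ) ≤ (2 * R + 3) / ε := by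
    have := Nat.ceil_lt_add_one (div_nonneg hR hε0.le)
    rw [le_div_iff₀ hε0]
    nlinarith [div_mul_cancel₀ R hε0.ne']
  have hcov := ENat.toNat_le_toNat (covNum_pi_Icc_le ι R hε0) (ENat.natCast_ne_top _)
  rw [ENat.toNat_natCast] at hcov
  calc ((covNum _ ε).toNat : ℝ) ≤ ((2 * ⌈R / ε⌉₊ + 1) ^ Fintype.card ι : ℕ) := mod_cast hcov
    _ ≤ ((2 * R + 3) / ε) ^ Fintype.card ι := by push_cast; gcongr
    _ = (2 * R + 3) ^ Fintype.card ι * ε ^ (-(Fintype.card ι : ℝ)) := by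
      rw [div_pow, Real.rpow_neg hε0.le, Real.rpow_natCast, div_eq_mul_inv]

variable {V : Type*} [NormedAddCommGroup V] [NormedSpace ℝ V] [FiniteDimensional ℝ V] {E : Set V}

lemma Bornology.IsBounded.mem_dimMBounds (hE : IsBounded E) {b : ℝ}
    (hb : Module.finrank ℝ V < b) : b ∈ dimMBounds E := by
  set e := (Module.finBasis ℝ V).equivFunL
  obtain ⟨R, hR, hER⟩ := (e.lipschitz.isBounded_image hE).subset_closedBall_lt 0 0
  set cube := univ.pi fun _ : Fin (Module.finrank ℝ V) => Icc (-R) R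
  have hEcube : E ⊆ e.symm '' cube := fun x hx => ⟨e x, fun i _ => by
    have := norm_le_pi_norm (e x) i
    have := mem_closedBall_zero_iff.1 (hER (mem_image_of_mem e hx))
    exact abs_le.1 ((Real.norm_eq_abs _).symm.trans_le (by linarith)), e.symm_apply_apply x⟩
  obtain ⟨K, hK, hKe⟩ : ∃ K : NNReal, 0 < K ∧ LipschitzWith K e.symm :=
    ⟨_, lt_max_of_lt_right one_pos, e.symm.lipschitz.weaken (le_max_left _ 1)⟩
  obtain ⟨a, hda, hab⟩ := exists_between hb
  have hcube : a ∈ dimMBounds cube := mem_dimMBounds_pi_Icc _ hR.le (by simpa using hda)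
  refine mem_dimMBounds_of_covNum_le (isCompact_univ_pi fun _ => isCompact_Icc).totallyBounded
    (mod_cast hK) (Eventually.of_forall fun ε => ?_) hcube hab
  exact (covNum_mono hEcube).trans (hKe.covNum_image_le hK)

lemma Bornology.IsBounded.dimMBounds_nonempty (hE : IsBounded E) : (dimMBounds E).Nonempty :=
  ⟨_, hE.mem_dimMBounds (lt_add_one _)⟩

lemma Bornology.IsBounded.dimM_le_finrank (hE : IsBounded E) : dimM E ≤ Module.finrank ℝ V :=
  dimM_le_of_forall_lt_mem fun _ => hE.mem_dimMBounds

lemma dimM_accumulate_le {f : ℕ → Set V} (hf : ∀ j, IsBounded (f j)) {s : ℝ}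
    (hs : ∀ j, dimM (f j) ≤ s) : ∀ k, dimM (accumulate f k) ≤ s
  | 0 => by rw [accumulate_zero_nat]; exact hs 0
  | k + 1 => by
    have hk := isBounded_accumulate hf k
    rw [accumulate_succ]
    exact (dimM_union_le hk.totallyBounded (hf _).totallyBounded hk.dimMBounds_nonempty
      (hf _).dimMBounds_nonempty).trans (max_le (dimM_accumulate_le hf hs k) (hs _))

end FiniteDimensional

section PackingDimension

variable {X : Type*} [PseudoMetricSpace X] {B : Set X}

lemma dimP_nonneg (B : Set X) : 0 ≤ dimP B :=
  Real.sInf_nonneg fun _ ⟨_, _, _, ha⟩ => ha ▸ Real.iSup_nonneg fun _ => dimM_nonneg _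

lemma dimP_le_dimM (hB : IsBounded B) : dimP B ≤ dimM B :=
  csInf_le ⟨0, fun _ ⟨_, _, _, ha⟩ => ha ▸ Real.iSup_nonneg fun _ => dimM_nonneg _⟩
    ⟨fun _ => B, subset_iUnion_of_subset 0 subset_rfl, fun _ => hB, ciSup_const.symm⟩

lemma exists_iSup_dimM_lt_of_dimP_lt {u : ℝ} (hu : dimP B < u) :
    ∃ f : ℕ → Set X, B ⊆ ⋃ j, f j ∧ (∀ j, IsBounded (f j)) ∧ ⨆ j, dimM (f j) < u := by
  have hne : {a : ℝ | ∃ f : ℕ → Set X, (B ⊆ ⋃ j, f j) ∧ (∀ j, IsBounded (f j)) ∧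
      a = ⨆ j, dimM (f j)}.Nonempty := by
    rcases B.eq_empty_or_nonempty with rfl | ⟨x₀, -⟩
    · exact ⟨_, fun _ => ∅, empty_subset _, fun _ => isBounded_empty, rfl⟩
    · exact ⟨_, fun j => closedBall x₀ j, (iUnion_closedBall_nat x₀).symm ▸ subset_univ B,
        fun _ => isBounded_closedBall, rfl⟩
  obtain ⟨_, ⟨f, hBf, hf, rfl⟩, hlt⟩ := exists_lt_of_csInf_lt hne hu
  exact ⟨f, hBf, hf, hlt⟩

end PackingDimension

section Patterns

open AffineMap

variable {V W : Type*} [AddCommGroup V] [Module ℝ V] [AddCommGroup W] [Module ℝ W]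
  {P : Finset ℝ} {B S : Set V}

def HasPatternsAt (P : Finset ℝ) (B S : Set V) : Prop :=
  ∀ x ∈ S, ∃ r : V, ∀ p ∈ P, x + p • r ∈ B

lemma HasPatternsAt.image_affineMap (h : HasPatternsAt P B S) (φ : V →ᵃ[ℝ] W) :
    HasPatternsAt P (φ '' B) (φ '' S) := by
  rintro _ ⟨x, hx, rfl⟩
  obtain ⟨r, hr⟩ := h x hx
  refine ⟨φ.linear r, fun p hp => ⟨x + p • r, hr p hp, ?_⟩⟩
  rw [add_comm, ← vadd_eq_add, φ.map_vadd, map_smul, vadd_eq_add, add_comm]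

lemma HasPatternsAt.of_homothety_image {c : V} {l : ℝ} (hl : l ≠ 0)
    (h : HasPatternsAt P B (homothety c l '' S)) : HasPatternsAt P (homothety c l⁻¹ '' B) S := by
  simpa [image_image, ← homothety_mul_apply, inv_mul_cancel₀ hl] using
    h.image_affineMap (homothety c l⁻¹)

lemma HasPatternsAt.exists_accumulate {f : ℕ → Set V} (h : HasPatternsAt P B S)
    (hBf : B ⊆ ⋃ j, f j) : ∀ x ∈ S, ∃ r : V, ∃ k, ∀ p ∈ P, x + p • r ∈ accumulate f k := by
  classical
  intro x hx
  obtain ⟨r, hr⟩ := h x hx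
  have hP : ((P.image fun p => x + p • r : Finset V) : Set V) ⊆ ⋃ k, accumulate f k := by
    rw [iUnion_accumulate]
    simpa [subset_def] using fun p hp => hBf (hr p hp)
  obtain ⟨k, hk⟩ :=
    monotone_accumulate.directed_le.exists_mem_subset_of_finset_subset_biUnion hP
  exact ⟨r, k, fun p hp => hk (Finset.mem_image_of_mem _ hp)⟩

end Patterns

lemma IsCompact.exists_inter_ball_subset_of_subset_iUnion {X ι : Type*} [MetricSpace X]
    [Countable ι] {S : Set X} (hS : IsCompact S) (hne : S.Nonempty) {E : ι → Set X}
    (hE : ∀ i, IsClosed (E i)) (hSE : S ⊆ ⋃ i, E i) :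
    ∃ i, ∃ x ∈ S, ∃ ρ > 0, S ∩ ball x ρ ⊆ E i := by
  have := isCompact_iff_compactSpace.1 hS
  have := hne.to_subtype
  obtain ⟨i, x, hx⟩ := nonempty_interior_of_iUnion_of_closed
    (fun i => (hE i).preimage continuous_subtype_val)
    (eq_univ_of_forall fun x : S => by simpa using hSE x.2)
  obtain ⟨ρ, hρ, hball⟩ := Metric.mem_nhds_iff.1 (mem_interior_iff_mem_nhds.1 hx)
  exact ⟨i, x, x.2, ρ, hρ, fun y ⟨hyS, hy⟩ => hball (show (⟨y, hyS⟩ : S) ∈ ball x ρ from hy)⟩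

section NormedSpace

open AffineMap

variable {V : Type*} [NormedAddCommGroup V] [NormedSpace ℝ V] {P : Finset ℝ} {S : Set V}

lemma lipschitzWith_homothety (c : V) (l : ℝ) : LipschitzWith ‖l‖₊ (homothety c l) :=
  LipschitzWith.of_dist_le_mul fun x y => by
    simp [homothety_apply, dist_eq_norm, ← smul_sub, norm_smul]

lemma Convex.exists_homothety_image_subset_inter_ball (hS : Convex ℝ S) (hSb : IsBounded S)
    {x : V} (hx : x ∈ S) {ρ : ℝ} (hρ : 0 < ρ) :
    ∃ l : ℝ, 0 < l ∧ homothety x l '' S ⊆ S ∩ ball x ρ := by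
  obtain ⟨R, hR, hSR⟩ := hSb.subset_ball_lt 0 x
  set l := min 1 (ρ / R)
  have hl : 0 < l := lt_min one_pos (div_pos hρ hR)
  refine ⟨l, hl, ?_⟩
  rintro _ ⟨y, hy, rfl⟩
  refine ⟨homothety_eq_lineMap x l y ▸ hS.lineMap_mem hx hy ⟨hl.le, min_le_left _ _⟩, ?_⟩
  rw [mem_ball, dist_homothety_center, Real.norm_of_nonneg hl.le, dist_comm]
  calc l * dist y x < l * R := mul_lt_mul_of_pos_left (mem_ball.1 (hSR hy)) hl
    _ ≤ ρ / R * R := by gcongr; exact min_le_right _ _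
    _ = ρ := div_mul_cancel₀ ρ hR.ne'

variable [ProperSpace V]

lemma IsClosed.setOf_exists_pattern {G : Set V} (hG : IsClosed G) (M : ℝ) :
    IsClosed {x | ∃ r ∈ closedBall (0 : V) M, ∀ p ∈ P, x + p • r ∈ G} := by
  refine IsSeqClosed.isClosed fun {x x₀} hx hlim => ?_
  choose r hrM hrG using hx
  obtain ⟨r₀, hr₀, φ, hφ, hrlim⟩ := (isCompact_closedBall (0 : V) M).tendsto_subseq hrM
  refine ⟨r₀, hr₀, fun p hp => hG.mem_of_tendsto ((hlim.comp hφ.tendsto_atTop).add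
    (hrlim.const_smul p)) (Eventually.of_forall fun j => hrG (φ j) p hp)⟩

lemma exists_hasPatternsAt_homothety_image (hS : IsCompact S) (hSc : Convex ℝ S)
    (hSne : S.Nonempty) {G : ℕ → Set V} (hG : ∀ k, IsClosed (G k))
    (h : ∀ x ∈ S, ∃ r : V, ∃ k, ∀ p ∈ P, x + p • r ∈ G k) :
    ∃ k, ∃ x₀ : V, ∃ l : ℝ, 0 < l ∧ HasPatternsAt P (G k) (homothety x₀ l '' S) := by
  set E : ℕ × ℕ → Set V := fun km => {x | ∃ r ∈ closedBall 0 km.2, ∀ p ∈ P, x + p • r ∈ G km.1}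
  have hcover : S ⊆ ⋃ km, E km := by
    intro x hx
    obtain ⟨r, k, hr⟩ := h x hx
    obtain ⟨m, hm⟩ := exists_nat_ge ‖r‖
    exact mem_iUnion.2 ⟨(k, m), r, mem_closedBall_zero_iff.2 hm, hr⟩
  obtain ⟨⟨k, m⟩, x₀, hx₀, ρ, hρ, hsub⟩ := hS.exists_inter_ball_subset_of_subset_iUnion hSne
    (fun km : ℕ × ℕ => (hG km.1).setOf_exists_pattern _) hcover
  obtain ⟨l, hl, hlS⟩ := hSc.exists_homothety_image_subset_inter_ball hS.isBounded hx₀ hρ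
  refine ⟨k, x₀, l, hl, fun x hx => ?_⟩
  obtain ⟨r, -, hr⟩ := hsub (hlS hx)
  exact ⟨r, hr⟩

end NormedSpace

section FiniteDimensional

open AffineMap

variable {V : Type*} [NormedAddCommGroup V] [NormedSpace ℝ V] [FiniteDimensional ℝ V]

theorem exists_isBounded_hasPatternsAt_dimM_lt {P : Finset ℝ} {S B : Set V} (hS : IsCompact S)
    (hSc : Convex ℝ S) (hSne : S.Nonempty) (hB : HasPatternsAt P B S) {u : ℝ}
    (hu : dimP B < u) : ∃ B', IsBounded B' ∧ HasPatternsAt P B' S ∧ dimM B' < u := by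
  obtain ⟨f, hBf, hf, hfu⟩ := exists_iSup_dimM_lt_of_dimP_lt hu
  set G := fun k => closure (accumulate f k)
  obtain ⟨k, x₀, l, hl, hpat⟩ := exists_hasPatternsAt_homothety_image hS hSc hSne
    (G := G) (fun _ => isClosed_closure) fun x hx =>
      let ⟨r, k, hr⟩ := hB.exists_accumulate hBf x hx
      ⟨r, k, fun p hp => subset_closure (hr p hp)⟩
  have hAk := isBounded_accumulate hf k
  have hGk : IsBounded (G k) := hAk.closure
  have hbdd : BddAbove (range fun j => dimM (f j)) :=
    ⟨_, forall_mem_range.2 fun j => (hf j).dimM_le_finrank⟩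
  refine ⟨homothety x₀ l⁻¹ '' G k, (lipschitzWith_homothety _ _).isBounded_image hGk,
    hpat.of_homothety_image hl.ne', ?_⟩
  calc dimM (homothety x₀ l⁻¹ '' G k)
      ≤ dimM (G k) := (lipschitzWith_homothety _ _).dimM_image_le hGk.totallyBounded
        hGk.dimMBounds_nonempty
    _ ≤ dimM (accumulate f k) := dimM_closure_le hAk.totallyBounded hAk.dimMBounds_nonempty
    _ ≤ ⨆ j, dimM (f j) := dimM_accumulate_le hf (le_ciSup hbdd) k
    _ < u := hfu

end FiniteDimensional

def unitCube (ι : Type*) [Fintype ι] : Set (EuclideanSpace ℝ ι) := {x | ∀ i, x i ∈ Icc 0 1}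

lemma isCompact_unitCube (ι : Type*) [Fintype ι] : IsCompact (unitCube ι) := by
  have : unitCube ι = EuclideanSpace.equiv ι ℝ ⁻¹' univ.pi fun _ => Icc 0 1 := by
    ext x
    simp only [unitCube, mem_preimage, mem_univ_pi]
    rfl
  rw [this]
  exact (EuclideanSpace.equiv ι ℝ).toHomeomorph.isCompact_preimage.2
    (isCompact_univ_pi fun _ => isCompact_Icc)

lemma convex_unitCube (ι : Type*) [Fintype ι] : Convex ℝ (unitCube ι) :=
  fun _ hx _ hy _ _ ha hb hab i => convex_Icc 0 1 (hx i) (hy i) ha hb hab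

lemma zero_mem_unitCube (ι : Type*) [Fintype ι] : 0 ∈ unitCube ι :=
  fun _ => ⟨le_rfl, zero_le_one⟩

theorem stmt7_general (n : ℕ) (P : Finset ℝ) :
    sInf { a : ℝ | ∃ B : Set (EuclideanSpace ℝ (Fin n)), IsBounded B ∧
        (∀ x : EuclideanSpace ℝ (Fin n), (∀ i, x i ∈ Icc (0 : ℝ) 1) →
          ∃ r : EuclideanSpace ℝ (Fin n), ∀ p ∈ P, x + p • r ∈ B) ∧
        a = dimM B } =
    sInf { a : ℝ | ∃ B : Set (EuclideanSpace ℝ (Fin n)),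
        (∀ x : EuclideanSpace ℝ (Fin n), (∀ i, x i ∈ Icc (0 : ℝ) 1) →
          ∃ r : EuclideanSpace ℝ (Fin n), ∀ p ∈ P, x + p • r ∈ B) ∧
        a = dimP B } := by
  have hcube : HasPatternsAt P (unitCube (Fin n)) (unitCube (Fin n)) :=
    fun x hx => ⟨0, fun p _ => by simpa using hx⟩
  refine le_antisymm (le_csInf ⟨_, _, hcube, rfl⟩ ?_)
    (le_csInf ⟨_, _, (isCompact_unitCube _).isBounded, hcube, rfl⟩ ?_)
  · rintro _ ⟨B, hB, rfl⟩
    refine le_of_forall_gt_imp_ge_of_dense fun u hu => ?_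
    obtain ⟨B', hB'b, hB', hB'u⟩ := exists_isBounded_hasPatternsAt_dimM_lt
      (isCompact_unitCube _) (convex_unitCube _) ⟨0, zero_mem_unitCube _⟩ hB hu
    refine csInf_le_of_le ⟨0, ?_⟩ ⟨B', hB'b, hB', rfl⟩ hB'u.le
    rintro _ ⟨B, -, -, rfl⟩
    exact dimM_nonneg B
  · rintro _ ⟨B, hBb, hB, rfl⟩
    refine csInf_le_of_le ⟨0, ?_⟩ ⟨B, hB, rfl⟩ (dimP_le_dimM hBb)
    rintro _ ⟨B, -, rfl⟩
    exact dimP_nonneg B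

/-- For every `n ≥ 1` and nonempty finite `P ⊂ ℝ`, the infimum of the Minkowski dimension over
bounded `B ⊆ ℝ^n` containing a `P`-pattern `{x + p·r : p ∈ P}` with basepoint `x` for every
`x ∈ [0,1]^n` equals the infimum of the packing dimension over arbitrary such sets. -/
theorem stmt7 (n : ℕ) (hn : 1 ≤ n) (P : Finset ℝ) (hP : P.Nonempty) :
    sInf { a : ℝ | ∃ B : Set (EuclideanSpace ℝ (Fin n)), IsBounded B ∧
        (∀ x : EuclideanSpace ℝ (Fin n), (∀ i, x i ∈ Icc (0 : ℝ) 1) →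
          ∃ r : EuclideanSpace ℝ (Fin n), ∀ p ∈ P, x + p • r ∈ B) ∧
        a = dimM B } =
    sInf { a : ℝ | ∃ B : Set (EuclideanSpace ℝ (Fin n)),
        (∀ x : EuclideanSpace ℝ (Fin n), (∀ i, x i ∈ Icc (0 : ℝ) 1) →
          ∃ r : EuclideanSpace ℝ (Fin n), ∀ p ∈ P, x + p • r ∈ B) ∧
        a = dimP B } :=
  stmt7_general n P
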